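/- Let a ∈ ℝ^(2n+1) be nonzero, b₁,…,bₙ ∈ ℂ^(2n+1), and suppose {a, b₁,…,bₙ, b̄₁,…,b̄ₙ} is a basis of ℂ^(2n+1). For 1 ≤ i ≤ 2n+1 define uᵢ = (aⁱ, b₁ⁱ, …, bₙⁱ) ∈ ℝ × ℂⁿ ≅ ℝ^(2n+1). Then u₁, …, u_(2n+1) are linearly independent over ℝ. -/

import Mathlib

/-!
A real relation `∑ gᵢ uᵢ = 0` says, coordinatewise, that the real vector `g` is orthogonal (for
the bilinear dot product) to `a` and to every `bⱼ`; since `g` is real, it is then orthogonal to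
every `b̄ⱼ` as well. These vectors span `ℂ^(2n+1)`, so `g = 0`.
-/

open Matrix

theorem Matrix.eq_zero_of_forall_dotProduct_eq_zero_of_span_eq_top {R m ι : Type*}
    [CommSemiring R] [Fintype m] {v : ι → m → R} (hv : Submodule.span R (Set.range v) = ⊤)
    {c : m → R} (hc : ∀ x, c ⬝ᵥ v x = 0) : c = 0 := by
  have hzero : dotProductBilin R R c = 0 := LinearMap.ext_on_range hv (by simpa using hc)
  exact dotProduct_eq_zero c fun w => LinearMap.congr_fun hzero w

theorem Matrix.ofReal_comp_dotProduct_star {m : Type*} [Fintype m] (g : m → ℝ) (w : m → ℂ) :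
    ((↑) ∘ g : m → ℂ) ⬝ᵥ star w = star (((↑) ∘ g : m → ℂ) ⬝ᵥ w) := by
  have hg : star ((↑) ∘ g : m → ℂ) = (↑) ∘ g := funext fun i => Complex.conj_ofReal (g i)
  rw [← star_dotProduct_star, hg, dotProduct_comm]

theorem stmt_3 (n : ℕ)
    (a : Fin (2 * n + 1) → ℝ)
    (b : Fin n → Fin (2 * n + 1) → ℂ)
    (F : Option (Fin n ⊕ Fin n) → (Fin (2 * n + 1) → ℂ))
    (hF : F = fun x => match x with
      | none => fun i => (a i : ℂ)
      | some (Sum.inl j) => b j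
      | some (Sum.inr j) => fun i => (starRingEnd ℂ) (b j i))
    (hspan : Submodule.span ℂ (Set.range F) = ⊤)
    (u : Fin (2 * n + 1) → ℝ × (Fin n → ℂ))
    (hu : u = fun i => (a i, fun j => b j i)) :
    LinearIndependent ℝ u := by
  subst hF hu
  rw [Fintype.linearIndependent_iff]
  intro g hg
  have ha : g ⬝ᵥ a = 0 := by simpa [dotProduct, Prod.fst_sum] using congrArg Prod.fst hg
  have hb (j : Fin n) : ((↑) ∘ g : _ → ℂ) ⬝ᵥ b j = 0 := by
    simpa [dotProduct, Prod.snd_sum, Finset.sum_apply, Complex.real_smul] using congrArg (fun p => p.2 j) hg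
  have hc : ((↑) ∘ g : _ → ℂ) = 0 := by
    refine eq_zero_of_forall_dotProduct_eq_zero_of_span_eq_top hspan ?_
    rintro (_ | j | j)
    · exact (RingHom.map_dotProduct Complex.ofRealHom g a).symm.trans (by simp [ha])
    · exact hb j
    · exact (ofReal_comp_dotProduct_star g (b j)).trans (by rw [hb j, star_zero])
  exact fun i => by simpa using congrFun hc i
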